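/- Forward mean of powers: Let x(s) = c₁q^s + c₂q^{-s} + c₃ be a q-quadratic lattice and x₁(s) = x(s+1/2). Then for every n ≥ 0 there exists a polynomial r of degree at most n whose leading coefficient equals α_q(n) = (q^{n/2}+q^{-n/2})/2, such that for all integers s, (x(s+1)^n + x(s)^n)/2 = r(x₁(s)). -/

import Mathlib

/-!
Put `a = x(s+1)`, `b = x(s)` and `y = x₁(s)`. Both `a + b` and `a b` are polynomials in `y`, of
degrees 1 and 2, with leading coefficients `q^{1/2} + q^{-1/2}` and `1 = q^{1/2} q^{-1/2}`. The
power sums `aⁿ + bⁿ` obey `pₙ₊₂ = (a + b) pₙ₊₁ - a b pₙ`, so they are polynomials in `y` of degree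
at most `n`, and their top coefficients obey the same recursion with `a, b` replaced by
`q^{1/2}, q^{-1/2}`, giving `q^{n/2} + q^{-n/2}`.
-/

open Polynomial

section PowerSum

variable {R : Type*} [CommRing R] {S P : R[X]}

/-- `aⁿ + bⁿ` as a polynomial in `y`, when `S` and `P` express `a + b` and `a b` in terms of `y`. -/
noncomputable def powerSumPoly (S P : R[X]) : ℕ → R[X]
  | 0 => 2
  | 1 => S
  | n + 2 => S * powerSumPoly S P (n + 1) - P * powerSumPoly S P n

theorem eval_powerSumPoly {a b y : R} (hS : S.eval y = a + b) (hP : P.eval y = a * b) :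
    ∀ n, (powerSumPoly S P n).eval y = a ^ n + b ^ n
  | 0 => by norm_num [powerSumPoly]
  | 1 => by simpa [powerSumPoly] using hS
  | n + 2 => by
    rw [powerSumPoly, eval_sub, eval_mul, eval_mul, hS, hP, eval_powerSumPoly hS hP (n + 1),
      eval_powerSumPoly hS hP n]
    ring

theorem natDegree_powerSumPoly_le (hS : S.natDegree ≤ 1) (hP : P.natDegree ≤ 2) :
    ∀ n, (powerSumPoly S P n).natDegree ≤ n
  | 0 => by simp [powerSumPoly]
  | 1 => hS
  | n + 2 => by
    have h₁ := natDegree_mul_le_of_le hS (natDegree_powerSumPoly_le hS hP (n + 1))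
    have h₀ := natDegree_mul_le_of_le hP (natDegree_powerSumPoly_le hS hP n)
    exact (natDegree_sub_le _ _).trans (max_le (by omega) (by omega))

theorem coeff_powerSumPoly_self {ρ σ : R} (hS : S.natDegree ≤ 1) (hP : P.natDegree ≤ 2)
    (hS₁ : S.coeff 1 = ρ + σ) (hP₂ : P.coeff 2 = ρ * σ) :
    ∀ n, (powerSumPoly S P n).coeff n = ρ ^ n + σ ^ n
  | 0 => by norm_num [powerSumPoly]
  | 1 => by simpa [powerSumPoly] using hS₁
  | n + 2 => by
    have h₁ := coeff_mul_add_eq_of_natDegree_le hS (natDegree_powerSumPoly_le hS hP (n + 1))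
    have h₀ := coeff_mul_add_eq_of_natDegree_le hP (natDegree_powerSumPoly_le hS hP n)
    rw [show 1 + (n + 1) = n + 2 by omega] at h₁
    rw [add_comm] at h₀
    rw [powerSumPoly, coeff_sub, h₁, h₀, hS₁, hP₂, coeff_powerSumPoly_self hS hP hS₁ hP₂ (n + 1),
      coeff_powerSumPoly_self hS hP hS₁ hP₂ n]
    ring

end PowerSum

section QLattice

variable {K : Type*} [Field K] (c₁ c₂ c₃ r : K)

/-- `x(s) = qLattice c₁ c₂ c₃ r (2 * s)` and `x₁(s) = qLattice c₁ c₂ c₃ r (2 * s + 1)`,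
where `r = q^{1/2}`. -/
def qLattice (t : ℤ) : K := c₁ * r ^ t + c₂ * r ^ (-t) + c₃

noncomputable def qLatticeSumPoly : K[X] := C (r + r⁻¹) * (X - C c₃) + C (2 * c₃)

noncomputable def qLatticeProdPoly : K[X] :=
  (X - C c₃) ^ 2 + C (c₃ * (r + r⁻¹)) * (X - C c₃) + C (c₁ * c₂ * (r - r⁻¹) ^ 2 + c₃ ^ 2)

theorem natDegree_qLatticeSumPoly_le : (qLatticeSumPoly c₃ r).natDegree ≤ 1 := by
  unfold qLatticeSumPoly; compute_degree

theorem coeff_qLatticeSumPoly_one : (qLatticeSumPoly c₃ r).coeff 1 = r + r⁻¹ := by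
  rw [qLatticeSumPoly, coeff_add, coeff_C_mul, coeff_sub, coeff_X_one, coeff_C, coeff_C]
  simp

theorem natDegree_qLatticeProdPoly : (qLatticeProdPoly c₁ c₂ c₃ r).natDegree = 2 := by
  unfold qLatticeProdPoly; compute_degree!

theorem coeff_qLatticeProdPoly_two : (qLatticeProdPoly c₁ c₂ c₃ r).coeff 2 = 1 := by
  have hmonic : (qLatticeProdPoly c₁ c₂ c₃ r).Monic := by unfold qLatticeProdPoly; monicity!
  simpa only [natDegree_qLatticeProdPoly] using hmonic.coeff_natDegree

variable {r}

theorem eval_qLatticeSumPoly (hr : r ≠ 0) (t : ℤ) :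
    (qLatticeSumPoly c₃ r).eval (qLattice c₁ c₂ c₃ r t) =
      qLattice c₁ c₂ c₃ r (t + 1) + qLattice c₁ c₂ c₃ r (t - 1) := by
  have : r ^ t ≠ 0 := zpow_ne_zero t hr
  simp only [qLatticeSumPoly, qLattice, eval_add, eval_mul, eval_sub, eval_C, eval_X,
    zpow_neg, zpow_add_one₀ hr, zpow_sub_one₀ hr]
  field_simp
  ring

theorem eval_qLatticeProdPoly (hr : r ≠ 0) (t : ℤ) :
    (qLatticeProdPoly c₁ c₂ c₃ r).eval (qLattice c₁ c₂ c₃ r t) =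
      qLattice c₁ c₂ c₃ r (t + 1) * qLattice c₁ c₂ c₃ r (t - 1) := by
  have : r ^ t ≠ 0 := zpow_ne_zero t hr
  simp only [qLatticeProdPoly, qLattice, eval_add, eval_mul, eval_sub, eval_C, eval_X, eval_pow,
    zpow_neg, zpow_add_one₀ hr, zpow_sub_one₀ hr]
  field_simp
  ring

end QLattice

/-- Forward mean of powers on a q-quadratic lattice: for every `n ≥ 0` there is a
polynomial of degree at most `n` whose coefficient of `X^n` equals
`α_q(n) = (r^n + r^{-n})/2`, such that
`(x(s+1)^n + x(s)^n)/2 = r(x₁(s))` for all integers `s`, where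
`x(s) = c₁ r^{2s} + c₂ r^{-2s} + c₃` and `x₁(s) = c₁ r^{2s+1} + c₂ r^{-(2s+1)} + c₃`. -/
theorem forward_mean_of_powers (r c₁ c₂ c₃ : ℂ) (hr : r ≠ 0) (n : ℕ) :
    ∃ p : Polynomial ℂ, p.natDegree ≤ n ∧
      p.coeff n = (r ^ (n : ℤ) + r ^ (-(n : ℤ))) / 2 ∧
      ∀ s : ℤ,
        ((c₁ * r ^ (2 * (s + 1)) + c₂ * r ^ (-(2 * (s + 1))) + c₃) ^ n +
            (c₁ * r ^ (2 * s) + c₂ * r ^ (-(2 * s)) + c₃) ^ n) / 2 =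
        p.eval (c₁ * r ^ (2 * s + 1) + c₂ * r ^ (-(2 * s + 1)) + c₃) := by
  set S := qLatticeSumPoly c₃ r
  set P := qLatticeProdPoly c₁ c₂ c₃ r
  have hS := natDegree_qLatticeSumPoly_le c₃ r
  have hP := (natDegree_qLatticeProdPoly c₁ c₂ c₃ r).le
  refine ⟨C 2⁻¹ * powerSumPoly S P n, (natDegree_C_mul_le _ _).trans
    (natDegree_powerSumPoly_le hS hP n), ?_, fun s => ?_⟩
  · have hP₂ : P.coeff 2 = r * r⁻¹ := by
      rw [coeff_qLatticeProdPoly_two, mul_inv_cancel₀ hr]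
    rw [coeff_C_mul, coeff_powerSumPoly_self hS hP (coeff_qLatticeSumPoly_one c₃ r) hP₂,
      zpow_neg, zpow_natCast, inv_pow, inv_mul_eq_div]
  · have h := eval_powerSumPoly (eval_qLatticeSumPoly c₁ c₂ c₃ hr (2 * s + 1))
      (eval_qLatticeProdPoly c₁ c₂ c₃ hr (2 * s + 1)) n
    rw [show 2 * s + 1 + 1 = 2 * (s + 1) by ring, add_sub_cancel_right] at h
    rw [eval_C_mul, inv_mul_eq_div]
    exact (congrArg (· / 2) h).symm
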